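/- arXiv:2401.16358 — 2 statements merged into one kernel-verified Lean document; each statement's English description precedes it below -/
import Mathlib

section
/- Assume R is standard graded (generated as an R_0-algebra by its degree-1 component) and set R_+ := ⨁_{n ≥ 1} R_n. If M ≠ 0 and depth(R_+, M) = 0, i.e. every element of R_+ is a zerodivisor on M, then there exists r ∈ Ass_R(M) with R_+ ⊆ r, and v(M) ≤ end(Γ_{R_+}(M)), where end(Γ_{R_+}(M)) := sup{n ∈ ℤ : the degree-n component of Γ_{R_+}(M) is nonzero}. -/
/-!
Prime avoidance over the finitely many associated primes puts `R₊`, which consists of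
zerodivisors, inside some `ann y`; a nonzero homogeneous component of `y` is then killed by `R₊`,
so `Γ_{R₊}(M)` has nonzero homogeneous elements. One of them with maximal annihilator has a prime
annihilator, and its degree lies in both sets. The infimum and supremum are attained: `M` is
finitely generated over a nonnegatively graded ring, so it vanishes in low degrees, and
`Γ_{R₊}(M)` is finitely generated and killed by some `R₊ᴷ ⊇ R_{≥ K}`, so it vanishes in high
degrees.
-/

open scoped Pointwise
open DirectSum SetLike

section AssociatedPrimes

variable {R M : Type*} [CommRing R] [IsNoetherianRing R] [AddCommGroup M] [Module R M]

theorem Ideal.exists_mem_associatedPrimes_le_of_subset_zero_divisors [Module.Finite R M]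
    {I : Ideal R} (hI : (I : Set R) ⊆ {r | ∃ x : M, x ≠ 0 ∧ r • x = 0}) :
    ∃ q ∈ associatedPrimes R M, I ≤ q :=
  (I.subset_union_prime_finite (associatedPrimes.finite R M) (f := id) 0 0
    fun _ hq _ _ => hq.isPrime).mp (biUnion_associatedPrimes_eq_zero_divisors R M ▸ hI)

theorem exists_ne_zero_mem_torsionBySet_of_le_mem_associatedPrimes {I q : Ideal R}
    (hq : q ∈ associatedPrimes R M) (hIq : I ≤ q) :
    ∃ y : M, y ≠ 0 ∧ y ∈ Submodule.torsionBySet R M I := by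
  obtain ⟨hprime, y, rfl⟩ := isAssociatedPrime_iff.mp hq
  refine ⟨y, fun hy => hprime.ne_top ?_, (Submodule.mem_torsionBySet_iff _ _).mpr fun r => ?_⟩
  · simp [hy, Submodule.colon_singleton_zero]
  · simpa using Submodule.mem_colon_singleton.mp (hIq r.2)

end AssociatedPrimes

namespace Submodule

variable (R M : Type*) [CommRing R] [AddCommGroup M] [Module R M]

/-- The submodule `Γ_a(M)`. -/
def torsionByPowers (a : Ideal R) : Submodule R M :=
  ⨆ k : ℕ, torsionBySet R M ↑(a ^ k)

variable {R M}

theorem mem_torsionByPowers_iff {a : Ideal R} {x : M} :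
    x ∈ torsionByPowers R M a ↔ ∃ k : ℕ, ∀ r ∈ a ^ k, r • x = 0 := by
  rw [torsionByPowers, mem_iSup_of_directed _
    (Monotone.directed_le fun i j hij => torsionBySet_le_torsionBySet_pow i j hij a)]
  simp

theorem torsionBySet_le_torsionByPowers (a : Ideal R) :
    torsionBySet R M ↑a ≤ torsionByPowers R M a :=
  le_iSup_of_le 1 (by rw [pow_one])

theorem exists_torsionByPowers_eq_torsionBySet_pow [IsNoetherian R M] (a : Ideal R) :
    ∃ K : ℕ, torsionByPowers R M a = torsionBySet R M ↑(a ^ K) := by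
  obtain ⟨K, hK⟩ := monotone_stabilizes_iff_noetherian.mpr inferInstance
    ⟨fun k => torsionBySet R M ↑(a ^ k), fun i j hij => torsionBySet_le_torsionBySet_pow i j hij a⟩
  refine ⟨K, le_antisymm (iSup_le fun k => ?_) (le_iSup (fun k => torsionBySet R M ↑(a ^ k)) K)⟩
  rcases le_total k K with hk | hk
  · exact torsionBySet_le_torsionBySet_pow k K hk a
  · exact (hK k hk).ge

end Submodule

section GradedModule

variable {ι R M : Type*} [DecidableEq ι] [CommRing R] [AddCommGroup M] [Module R M]
  {ℳ : ι → AddSubgroup M} [Decomposition ℳ]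

theorem exists_coe_decompose_ne_zero {x : M} (hx : x ≠ 0) : ∃ j, (decompose ℳ x j : M) ≠ 0 := by
  have h : decompose ℳ x ≠ 0 := fun h =>
    hx (by rw [← (decompose ℳ).symm_apply_apply x, h, decompose_symm_zero])
  obtain ⟨j, hj⟩ := DFunLike.ne_iff.mp h
  rw [DirectSum.zero_apply, Ne, ← ZeroMemClass.coe_eq_zero] at hj
  exact ⟨j, hj⟩

theorem finite_setOf_coe_decompose_ne_zero {G : Set M} (hG : G.Finite) :
    {e | ∃ g ∈ G, (decompose ℳ g e : M) ≠ 0}.Finite := by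
  classical
  refine (hG.biUnion fun g _ => (decompose ℳ g).support.finite_toSet).subset ?_
  rintro e ⟨g, hg, he⟩
  exact Set.mem_biUnion hg (by simpa using he)

variable [AddCommGroup ι] {𝒜 : ι → AddSubgroup R} [GradedSMul 𝒜 ℳ]

theorem coe_decompose_smul_add_of_left_mem {r : R} {i : ι} (hr : r ∈ 𝒜 i) (x : M) (j : ι) :
    (decompose ℳ (r • x) (i + j) : M) = r • (decompose ℳ x j : M) := by
  induction x using Decomposition.inductionOn ℳ with
  | zero => simp
  | @homogeneous k m =>
    have hrm : r • (m : M) ∈ ℳ (i + k) := GradedSMul.smul_mem hr m.2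
    obtain rfl | hjk := eq_or_ne k j
    · rw [decompose_of_mem_same ℳ hrm, decompose_of_mem_same ℳ m.2]
    · rw [decompose_of_mem_ne ℳ hrm (by simpa using hjk), decompose_of_mem_ne ℳ m.2 hjk,
        smul_zero]
  | add x y hx hy =>
    simp only [smul_add, decompose_add, DirectSum.add_apply, AddMemClass.coe_add, hx, hy]

theorem smul_coe_decompose_eq_zero {r : R} {i : ι} (hr : r ∈ 𝒜 i) {x : M} (h : r • x = 0)
    (j : ι) : r • (decompose ℳ x j : M) = 0 := by
  rw [← coe_decompose_smul_add_of_left_mem hr, h, decompose_zero, DirectSum.zero_apply,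
    ZeroMemClass.coe_zero]

theorem coe_decompose_mem_torsionBySet_span {s : Set R} (hs : ∀ r ∈ s, ∃ i, r ∈ 𝒜 i) {x : M}
    (hx : x ∈ Submodule.torsionBySet R M ↑(Ideal.span s)) (j : ι) :
    (decompose ℳ x j : M) ∈ Submodule.torsionBySet R M ↑(Ideal.span s) := by
  rw [← Submodule.torsionBySet_eq_torsionBySet_span, Submodule.mem_torsionBySet_iff] at hx ⊢
  rintro ⟨r, hr⟩
  obtain ⟨i, hri⟩ := hs r hr
  exact smul_coe_decompose_eq_zero hri (hx ⟨r, hr⟩) j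

variable [GradedRing 𝒜]

theorem coe_decompose_smul_add_of_right_mem {x : M} {j : ι} (hx : x ∈ ℳ j) (r : R) (i : ι) :
    (decompose ℳ (r • x) (i + j) : M) = (decompose 𝒜 r i : R) • x := by
  induction r using Decomposition.inductionOn 𝒜 with
  | zero => simp
  | @homogeneous k a =>
    have hax : (a : R) • x ∈ ℳ (k + j) := GradedSMul.smul_mem a.2 hx
    obtain rfl | hik := eq_or_ne k i
    · rw [decompose_of_mem_same ℳ hax, decompose_of_mem_same 𝒜 a.2]
    · rw [decompose_of_mem_ne ℳ hax (by simpa using hik), decompose_of_mem_ne 𝒜 a.2 hik,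
        zero_smul]
  | add a b ha hb =>
    simp only [add_smul, decompose_add, DirectSum.add_apply, AddMemClass.coe_add, ha, hb]

theorem isHomogeneous_annihilator_span_singleton {x : M} {j : ι} (hx : x ∈ ℳ j) :
    (Submodule.span R {x}).annihilator.IsHomogeneous 𝒜 := by
  intro i r hr
  rw [Submodule.mem_annihilator_span_singleton] at hr ⊢
  rw [← coe_decompose_smul_add_of_right_mem hx, hr, decompose_zero, DirectSum.zero_apply,
    ZeroMemClass.coe_zero]

/-- The elements all of whose degree-`e` components are killed by `𝒜 (n - e)` form a submodule,
since multiplying by an element of degree `i` shifts components by `i`. -/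
theorem eq_zero_of_mem_span {G : Set M} {x : M} {n : ι} (hx : x ∈ ℳ n)
    (hxG : x ∈ Submodule.span R G)
    (hG : ∀ g ∈ G, ∀ e, ∀ s ∈ 𝒜 (n - e), s • (decompose ℳ g e : M) = 0) : x = 0 := by
  let Q : Submodule R M :=
    { carrier := {y | ∀ e, ∀ s ∈ 𝒜 (n - e), s • (decompose ℳ y e : M) = 0}
      zero_mem' := by simp
      add_mem' := fun {y z} hy hz e s hs => by
        rw [decompose_add, DirectSum.add_apply, AddMemClass.coe_add, smul_add, hy e s hs,
          hz e s hs, add_zero]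
      smul_mem' := fun c y hy => by
        induction c using Decomposition.inductionOn 𝒜 with
        | zero => simp
        | @homogeneous i c =>
          intro e s hs
          have hsc : s * c ∈ 𝒜 (n - (e - i)) := by
            simpa [sub_add_eq_add_sub, sub_sub_eq_add_sub] using GradedMul.mul_mem hs c.2
          rw [← add_sub_cancel i e, coe_decompose_smul_add_of_left_mem c.2,
            smul_smul, hy _ _ hsc]
        | add a b ha hb =>
          intro e s hs
          rw [add_smul, decompose_add, DirectSum.add_apply, AddMemClass.coe_add, smul_add,
            ha e s hs, hb e s hs, add_zero] }
  have hxQ : x ∈ Q := (Submodule.span_le (p := Q)).mpr hG hxG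
  simpa [decompose_of_mem_same ℳ hx] using hxQ n 1 (by simpa using GradedOne.one_mem)

end GradedModule

theorem ne_zero_of_isPrime_annihilator_span_singleton {R M : Type*} [CommRing R] [AddCommGroup M]
    [Module R M] {x : M} (hx : (Submodule.span R {x}).annihilator.IsPrime) : x ≠ 0 := by
  rintro rfl
  exact hx.ne_top (by rw [Submodule.span_zero_singleton, Submodule.annihilator_bot])

section LinearOrder

variable {ι R M : Type*} [AddCommGroup ι] [LinearOrder ι] [IsOrderedAddMonoid ι] [CommRing R]
  [AddCommGroup M] [Module R M] {ℳ : ι → AddSubgroup M} [Decomposition ℳ]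

/-- A maximal annihilator of a nonzero homogeneous element of `N` is prime: if `a b ∈ ann x` with
`b` homogeneous and `b ∉ ann x`, then `ann x ≤ ann (b • x)` forces equality, so `a ∈ ann x`. -/
theorem exists_isPrime_annihilator_of_homogeneous [IsNoetherianRing R] (𝒜 : ι → AddSubgroup R)
    [GradedRing 𝒜] [GradedSMul 𝒜 ℳ] (N : Submodule R M)
    (hN : ∃ j, ∃ x ∈ ℳ j, x ∈ N ∧ x ≠ 0) :
    ∃ j, ∃ x ∈ ℳ j, x ∈ N ∧ (Submodule.span R {x}).annihilator.IsPrime := by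
  let 𝒮 : Set (Ideal R) :=
    {I | ∃ j, ∃ x ∈ ℳ j, x ∈ N ∧ x ≠ 0 ∧ I = (Submodule.span R {x}).annihilator}
  obtain ⟨j, x, hxj, hxN, hx0⟩ := hN
  obtain ⟨_, ⟨j, x, hxj, hxN, hx0, rfl⟩, hmax⟩ :=
    set_has_maximal_iff_noetherian.mpr inferInstance 𝒮 ⟨_, j, x, hxj, hxN, hx0, rfl⟩
  refine ⟨j, x, hxj, hxN,
    (isHomogeneous_annihilator_span_singleton (𝒜 := 𝒜) hxj).isPrime_of_homogeneous_mem_or_mem ?_ ?_⟩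
  · simpa [Ne, Submodule.annihilator_eq_top_iff] using hx0
  · rintro a b - ⟨i, hb⟩ hab
    refine or_iff_not_imp_right.mpr fun hbx => ?_
    simp only [Submodule.mem_annihilator_span_singleton] at hab hbx ⊢
    have hle : (Submodule.span R {x}).annihilator ≤ (Submodule.span R {b • x}).annihilator :=
      fun r hr => by
        rw [Submodule.mem_annihilator_span_singleton] at hr ⊢
        rw [smul_comm, hr, smul_zero]
    have heq := hle.lt_or_eq.resolve_left
      (hmax _ ⟨i + j, b • x, GradedSMul.smul_mem hb hxj, N.smul_mem b hxN, hbx, rfl⟩)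
    have hab' : a ∈ (Submodule.span R {b • x}).annihilator := by
      rwa [Submodule.mem_annihilator_span_singleton, smul_smul]
    rwa [← heq, Submodule.mem_annihilator_span_singleton] at hab'

end LinearOrder

section IntGraded

variable {R M : Type*} [CommRing R] [AddCommGroup M] [Module R M]

theorem coe_subset_pow_of_subset_closure_mul {𝒜 : ℤ → AddSubgroup R}
    (hstd : ∀ n : ℤ, 0 ≤ n →
      (𝒜 (n + 1) : Set R) ⊆ ↑(AddSubgroup.closure ((𝒜 n : Set R) * (𝒜 1 : Set R))))
    {I : Ideal R} (hI : (𝒜 1 : Set R) ⊆ I) (k : ℕ) : (𝒜 k : Set R) ⊆ ↑(I ^ k) := by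
  induction k with
  | zero => simp
  | succ k ih =>
    refine fun r hr => (AddSubgroup.closure_le (K := (I ^ (k + 1)).toAddSubgroup)).mpr ?_
      (hstd k k.cast_nonneg (by simpa using hr))
    rintro _ ⟨a, ha, b, hb, rfl⟩
    rw [pow_succ]
    exact Ideal.mul_mem_mul (ih ha) (hI hb)

variable (𝒜 : ℤ → AddSubgroup R) {ℳ : ℤ → AddSubgroup M} [GradedRing 𝒜] [Decomposition ℳ]
  [GradedSMul 𝒜 ℳ]

theorem exists_forall_lt_eq_zero_of_finite [Module.Finite R M] (hA : ∀ i < 0, 𝒜 i = ⊥) :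
    ∃ d, ∀ u < d, ∀ x ∈ ℳ u, x = 0 := by
  obtain ⟨F, hF⟩ := Module.Finite.fg_top (R := R) (M := M)
  obtain ⟨d, hd⟩ := (finite_setOf_coe_decompose_ne_zero (ℳ := ℳ) F.finite_toSet).bddBelow
  refine ⟨d, fun u hu x hx => eq_zero_of_mem_span (𝒜 := 𝒜) hx (hF ▸ Submodule.mem_top) ?_⟩
  intro g hg e s hs
  by_cases hge : (decompose ℳ g e : M) = 0
  · rw [hge, smul_zero]
  · have hde : d ≤ e := hd ⟨g, hg, hge⟩
    rw [hA (u - e) (by omega), AddSubgroup.mem_bot] at hs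
    rw [hs, zero_smul]

theorem exists_forall_gt_eq_zero_of_fg {I : Ideal R} (h𝒜 : ∀ k : ℕ, (𝒜 k : Set R) ⊆ ↑(I ^ k))
    {N : Submodule R M} (hN : N.FG) {K : ℕ} (hK : N ≤ Submodule.torsionBySet R M ↑(I ^ K)) :
    ∃ D, ∀ n > D, ∀ x ∈ ℳ n, x ∈ N → x = 0 := by
  obtain ⟨G, rfl⟩ := hN
  obtain ⟨D, hD⟩ := (finite_setOf_coe_decompose_ne_zero (ℳ := ℳ) G.finite_toSet).bddAbove
  refine ⟨D + K, fun n hn x hx hxN => eq_zero_of_mem_span (𝒜 := 𝒜) hx hxN ?_⟩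
  intro g hg e s hs
  by_cases hge : (decompose ℳ g e : M) = 0
  · rw [hge, smul_zero]
  · have hDe : e ≤ D := hD ⟨g, hg, hge⟩
    have hKe : K ≤ (n - e).toNat := by omega
    have hsI : s ∈ I ^ K :=
      Ideal.pow_le_pow_right hKe (h𝒜 _ (by rwa [Int.toNat_of_nonneg (by omega)]))
    have hsg : s • g = 0 :=
      (Submodule.mem_torsionBySet_iff _ _).mp (hK (Submodule.subset_span hg)) ⟨s, hsI⟩
    exact smul_coe_decompose_eq_zero hs hsg e

end IntGraded

theorem v_number_le_end_gamma_of_depth_zero_general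
    {R M : Type*} [CommRing R] [IsNoetherianRing R]
    [AddCommGroup M] [Module R M] [Module.Finite R M]
    (𝒜 : ℤ → AddSubgroup R) (ℳ : ℤ → AddSubgroup M)
    [GradedRing 𝒜] [DirectSum.Decomposition ℳ]
    (hsmul : ∀ (i j : ℤ), ∀ r ∈ 𝒜 i, ∀ x ∈ ℳ j, r • x ∈ ℳ (i + j))
    (hA : ∀ i : ℤ, i < 0 → 𝒜 i = ⊥)
    (hstd : ∀ n : ℤ, 0 ≤ n →
      (𝒜 (n + 1) : Set R) ⊆ ↑(AddSubgroup.closure ((𝒜 n : Set R) * (𝒜 1 : Set R))))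
    (Rplus : Ideal R) (hRplus : Rplus = Ideal.span {r : R | ∃ n : ℤ, 1 ≤ n ∧ r ∈ 𝒜 n})
    (hdepth : ∀ r ∈ Rplus, ∃ x : M, x ≠ 0 ∧ r • x = 0) :
    (∃ q ∈ associatedPrimes R M, Rplus ≤ q) ∧
    sInf {u : ℤ | ∃ x ∈ ℳ u, (Submodule.span R {x}).annihilator.IsPrime}
      ≤ sSup {n : ℤ | ∃ x ∈ ℳ n, x ≠ 0 ∧ ∃ k : ℕ, 1 ≤ k ∧ ∀ r ∈ Rplus ^ k, r • x = 0} := by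
  have : GradedSMul 𝒜 ℳ := ⟨fun {i j} _ _ hr hx => hsmul i j _ hr _ hx⟩
  have := isNoetherian_of_isNoetherianRing_of_finite R M
  obtain ⟨q, hq, hRq⟩ := Rplus.exists_mem_associatedPrimes_le_of_subset_zero_divisors hdepth
  refine ⟨⟨q, hq, hRq⟩, ?_⟩
  obtain ⟨y, hy0, hy⟩ := exists_ne_zero_mem_torsionBySet_of_le_mem_associatedPrimes hq hRq
  obtain ⟨j, hyj⟩ := exists_coe_decompose_ne_zero (ℳ := ℳ) hy0
  have hyjΓ : (decompose ℳ y j : M) ∈ Submodule.torsionByPowers R M Rplus := by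
    subst hRplus
    refine Submodule.torsionBySet_le_torsionByPowers _
      (coe_decompose_mem_torsionBySet_span (𝒜 := 𝒜) ?_ hy j)
    exact fun r ⟨n, _, hr⟩ => ⟨n, hr⟩
  obtain ⟨n, x, hxn, hxΓ, hxprime⟩ := exists_isPrime_annihilator_of_homogeneous 𝒜
    (Submodule.torsionByPowers R M Rplus) ⟨j, _, SetLike.coe_mem _, hyjΓ, hyj⟩
  obtain ⟨k, hk⟩ := Submodule.mem_torsionByPowers_iff.mp hxΓ
  obtain ⟨d, hd⟩ := exists_forall_lt_eq_zero_of_finite 𝒜 (ℳ := ℳ) hA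
  have h𝒜 : ∀ k : ℕ, (𝒜 k : Set R) ⊆ ↑(Rplus ^ k) := coe_subset_pow_of_subset_closure_mul hstd
    (hRplus ▸ fun r hr => Ideal.subset_span ⟨1, le_rfl, hr⟩)
  obtain ⟨K, hK⟩ := Submodule.exists_torsionByPowers_eq_torsionBySet_pow (M := M) Rplus
  obtain ⟨D, hD⟩ :=
    exists_forall_gt_eq_zero_of_fg 𝒜 (ℳ := ℳ) h𝒜 (IsNoetherian.noetherian _) hK.le
  refine le_trans (b := n) (csInf_le ?_ ⟨x, hxn, hxprime⟩) (le_csSup ?_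
    ⟨x, hxn, ne_zero_of_isPrime_annihilator_span_singleton hxprime, k + 1, k.succ_pos,
      fun r hr => hk r (Ideal.pow_le_pow_right k.le_succ hr)⟩)
  · exact ⟨d, fun u ⟨z, hz, hzprime⟩ => not_lt.mp fun hu =>
      ne_zero_of_isPrime_annihilator_span_singleton hzprime (hd u hu z hz)⟩
  · exact ⟨D, fun m ⟨z, hz, hz0, k, _, hk⟩ => not_lt.mp fun hm =>
      hz0 (hD m hm z hz (Submodule.mem_torsionByPowers_iff.mpr ⟨k, hk⟩))⟩

/-- Let `R` be a commutative Noetherian ℕ-graded ring (encoded as a ℤ-graded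
ring with vanishing negative components) which is standard graded, `M ≠ 0` a finitely
generated ℤ-graded `R`-module, and `R_+ := ⨁_{n ≥ 1} R_n`.  If `depth(R_+, M) = 0`, i.e.
every element of `R_+` is a zerodivisor on `M`, then there is an associated prime
`r ∈ Ass_R(M)` with `R_+ ⊆ r`, and `v(M) ≤ end(Γ_{R_+}(M))`, where
`v(M) = inf{u | ∃ homogeneous x ∈ M_u with (0 :_R x) prime}` and `end(Γ_{R_+}(M))` is the
supremum of the degrees of the nonzero homogeneous elements of
`Γ_{R_+}(M) = ⋃_{k ≥ 1} (0 :_M R_+^k)`. -/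
theorem v_number_le_end_gamma_of_depth_zero
    {R M : Type*} [CommRing R] [IsNoetherianRing R]
    [AddCommGroup M] [Module R M] [Module.Finite R M]
    (𝒜 : ℤ → AddSubgroup R) (ℳ : ℤ → AddSubgroup M)
    [GradedRing 𝒜] [DirectSum.Decomposition ℳ]
    (hsmul : ∀ (i j : ℤ), ∀ r ∈ 𝒜 i, ∀ x ∈ ℳ j, r • x ∈ ℳ (i + j))
    (hA : ∀ i : ℤ, i < 0 → 𝒜 i = ⊥)
    (hstd : ∀ n : ℤ, 0 ≤ n →
      (𝒜 (n + 1) : Set R) ⊆ ↑(AddSubgroup.closure ((𝒜 n : Set R) * (𝒜 1 : Set R))))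
    (Rplus : Ideal R) (hRplus : Rplus = Ideal.span {r : R | ∃ n : ℤ, 1 ≤ n ∧ r ∈ 𝒜 n})
    (hM : ∃ x : M, x ≠ 0)
    (hdepth : ∀ r ∈ Rplus, ∃ x : M, x ≠ 0 ∧ r • x = 0) :
    (∃ q ∈ associatedPrimes R M, Rplus ≤ q) ∧
    sInf {u : ℤ | ∃ x ∈ ℳ u, (Submodule.span R {x}).annihilator.IsPrime}
      ≤ sSup {n : ℤ | ∃ x ∈ ℳ n, x ≠ 0 ∧ ∃ k : ℕ, 1 ≤ k ∧ ∀ r ∈ Rplus ^ k, r • x = 0} :=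
  v_number_le_end_gamma_of_depth_zero_general 𝒜 ℳ hsmul hA hstd Rplus hRplus hdepth
end

section
/- Assume ℒ_{(n,*)} ≠ 0 for all sufficiently large n, and let δ := min{j : y_j ∉ √(Ann_T ℒ)}. Then there exists b₁ ∈ ℤ such that indeg(ℒ_{(n,*)}) = d_δ · n + b₁ for all sufficiently large n, where indeg denotes the infimum of the degrees of nonzero homogeneous elements. -/
/-
Put `y := y δ` and pick `N` with `y j ^ N • ℒ = 0` for all `j < δ`. A nonzero element of `ℒ_{(n,u)}`
is a combination of monomials `y^β x^α` applied to finitely many homogeneous generators of `ℒ`, and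
a monomial that does not vanish there has `β j < N` for `j < δ`; as `d` is monotone, this gives
`u ≥ d δ * n - B` for a constant `B`. Let `K` be the kernel of a power `y ^ s` at which these
kernels stabilise. Multiplication by `y` maps `ℒ \ K` into itself and shifts bidegrees by
`(1, d δ)`, so the least degree `h n` of row `n` outside `K` satisfies `h (n + 1) ≤ h n + d δ`;
with the lower bound, `h n - d δ * n` is eventually constant. On the homogeneous submodule `K` the
element `y` is nilpotent, so either every `y j` is nilpotent on `K` and the rows of `K` start above
every line of slope `d δ + 1`, or the least `δ'` with `y δ'` not nilpotent on `K` exceeds `δ` and,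
by downward induction on `δ`, the rows of `K` start at `d δ' * n + b'` with `d δ' ≥ d δ`. The
initial degree of row `n` of `ℒ` is the smaller of the two.
-/

open DirectSum Filter Set

section GradedModule

variable {ι A M σA σM : Type*} [DecidableEq ι] [Semiring A] [AddCommMonoid M] [Module A M]
  [SetLike σA A] [SetLike σM M] [AddSubmonoidClass σM M] {𝒜 : ι → σA} (ℳ : ι → σM)
  [Decomposition ℳ]

theorem coe_decompose_smul_add_of_left_mem_s6 [AddLeftCancelMonoid ι] [SetLike.GradedSMul 𝒜 ℳ]
    {a : A} {i : ι} (ha : a ∈ 𝒜 i) (m : M) (j : ι) :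
    (decompose ℳ (a • m) (i + j) : M) = a • (decompose ℳ m j : M) := by
  induction m using Decomposition.inductionOn ℳ with
  | zero => simp
  | @homogeneous k m =>
    have ham : a • (m : M) ∈ ℳ (i + k) := SetLike.GradedSMul.smul_mem ha m.2
    obtain rfl | hjk := eq_or_ne j k
    · rw [decompose_of_mem_same ℳ ham, decompose_of_mem_same ℳ m.2]
    · rw [decompose_of_mem_ne ℳ ham (by simpa using hjk.symm),
        decompose_of_mem_ne ℳ m.2 hjk.symm, smul_zero]
  | add m m' hm hm' =>
    simp only [smul_add, decompose_add, DirectSum.add_apply, AddMemClass.coe_add, hm, hm']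

theorem coe_decompose_smul_add_of_right_mem_s6 [AddSubmonoidClass σA A] [AddRightCancelMonoid ι]
    [GradedRing 𝒜] [SetLike.GradedSMul 𝒜 ℳ] {m : M} {j : ι} (hm : m ∈ ℳ j) (a : A) (i : ι) :
    (decompose ℳ (a • m) (i + j) : M) = (decompose 𝒜 a i : A) • m := by
  induction a using Decomposition.inductionOn 𝒜 with
  | zero => simp
  | @homogeneous k a =>
    have ham : (a : A) • m ∈ ℳ (k + j) := SetLike.GradedSMul.smul_mem a.2 hm
    obtain rfl | hik := eq_or_ne i k
    · rw [decompose_of_mem_same ℳ ham, decompose_of_mem_same 𝒜 a.2]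
    · rw [decompose_of_mem_ne ℳ ham (by simpa using hik.symm),
        decompose_of_mem_ne 𝒜 a.2 hik.symm, zero_smul]
  | add a a' ha ha' =>
    simp only [add_smul, decompose_add, DirectSum.add_apply, AddMemClass.coe_add, ha, ha']

namespace Submodule

theorem IsHomogeneous.inf {p q : Submodule A M} (hp : p.IsHomogeneous ℳ)
    (hq : q.IsHomogeneous ℳ) : (p ⊓ q).IsHomogeneous ℳ :=
  fun i _ hm => ⟨hp i hm.1, hq i hm.2⟩

theorem IsHomogeneous.exists_finset_span_eq {p : Submodule A M} (hp : p.IsHomogeneous ℳ)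
    (hfg : p.FG) :
    ∃ s : Finset M, (∀ m ∈ s, SetLike.IsHomogeneousElem ℳ m) ∧ span A s = p := by
  classical
  obtain ⟨s, rfl⟩ := hfg
  refine ⟨s.biUnion fun m => (decompose ℳ m).support.image fun i => (decompose ℳ m i : M),
    ?_, le_antisymm ?_ ?_⟩
  · simp only [Finset.mem_biUnion, Finset.mem_image]
    rintro _ ⟨m, -, i, -, rfl⟩
    exact ⟨i, (decompose ℳ m i).2⟩
  · rw [span_le]
    simp only [Finset.coe_biUnion, Finset.coe_image, iUnion_subset_iff, image_subset_iff]
    exact fun m hm i _ => hp i (subset_span hm)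
  · rw [span_le]
    intro m hm
    rw [SetLike.mem_coe, ← sum_support_decompose ℳ m]
    exact sum_mem fun i hi =>
      subset_span (by simpa using ⟨m, hm, i, DFinsupp.mem_support_iff.1 hi, rfl⟩)

theorem IsHomogeneous.exists_homogeneous_mem_notMem {p q : Submodule A M}
    (hp : p.IsHomogeneous ℳ) (hpq : ¬p ≤ q) : ∃ i, ∃ m ∈ ℳ i, m ∈ p ∧ m ∉ q := by
  classical
  contrapose! hpq
  intro m hm
  rw [← sum_support_decompose ℳ m]
  exact sum_mem fun i _ => hpq i _ (decompose ℳ m i).2 (hp i hm)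

end Submodule

variable [AddSubmonoidClass σA A] [AddGroup ι] [GradedRing 𝒜] [SetLike.GradedSMul 𝒜 ℳ]

theorem exists_homogeneous_smul_ne_zero_of_mem_span {s : Finset M} {deg : M → ι}
    (hs : ∀ m ∈ s, m ∈ ℳ (deg m)) {m : M} (hm : m ∈ Submodule.span A s) {i : ι} (hmi : m ∈ ℳ i)
    (hm0 : m ≠ 0) : ∃ m' ∈ s, ∃ a ∈ 𝒜 (i - deg m'), a • m' ≠ 0 := by
  obtain ⟨f, -, rfl⟩ := Submodule.mem_span_finset.1 hm
  have hcomp : ∀ m' ∈ s,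
      (decompose ℳ (f m' • m') i : M) = (decompose 𝒜 (f m') (i - deg m') : A) • m' := by
    intro m' hm'
    rw [← coe_decompose_smul_add_of_right_mem_s6 ℳ (hs m' hm'), sub_add_cancel]
  rw [← decompose_of_mem_same ℳ hmi, decompose_sum, DFinsupp.finsetSum_apply,
    AddSubmonoidClass.coe_finsetSum, Finset.sum_congr rfl hcomp] at hm0
  obtain ⟨m', hm', hne⟩ := Finset.exists_ne_zero_of_sum_ne_zero hm0
  exact ⟨m', hm', _, (decompose 𝒜 (f m') _).2, hne⟩

end GradedModule

section Torsion

variable {ι A M σA σM : Type*} [DecidableEq ι] [AddLeftCancelMonoid ι] [CommSemiring A]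
  [AddCommMonoid M] [Module A M] [SetLike σA A] [SetLike σM M] [AddSubmonoidClass σM M]
  {𝒜 : ι → σA} (ℳ : ι → σM) [Decomposition ℳ] [SetLike.GradedSMul 𝒜 ℳ]

theorem Submodule.isHomogeneous_torsionBy {a : A} {i : ι}
    (ha : a ∈ 𝒜 i) : (torsionBy A M a).IsHomogeneous ℳ := fun j m hm => by
  rw [mem_torsionBy_iff] at hm ⊢
  rw [← coe_decompose_smul_add_of_left_mem_s6 ℳ ha, hm, decompose_zero, DirectSum.zero_apply,
    ZeroMemClass.coe_zero]

end Torsion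

theorem Int.exists_eventually_eq_linear_of_le_add {h : ℤ → ℤ} {a B : ℤ}
    (hstep : ∀ᶠ n in atTop, h (n + 1) ≤ h n + a) (hlow : ∀ᶠ n in atTop, a * n + B ≤ h n) :
    ∃ b, ∀ᶠ n in atTop, h n = a * n + b := by
  obtain ⟨n₀, hn₀⟩ := eventually_atTop.1 (hstep.and hlow)
  -- `h n - a * n` is antitone from `n₀` on and bounded below, hence eventually constant
  obtain ⟨_, ⟨n₁, hn₁, rfl⟩, hmin⟩ := Int.exists_least_of_bdd
    (P := fun v => ∃ n ≥ n₀, h n - a * n = v)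
    ⟨B, by rintro _ ⟨n, hn, rfl⟩; linarith [(hn₀ n hn).2]⟩ ⟨_, n₀, le_rfl, rfl⟩
  refine ⟨h n₁ - a * n₁, eventually_atTop.2 ⟨n₁, fun n hn => le_antisymm ?_ ?_⟩⟩
  · induction n, hn using Int.leInduction with
    | base => linarith
    | succ n hn ih => linarith [(hn₀ n (hn₁.trans hn)).1]
  · linarith [hmin _ ⟨n, hn₁.trans hn, rfl⟩]

theorem Int.eventually_sInf_union_eq_of_lt {S S' : ℤ → Set ℤ} {a a' b b' : ℤ} (ha : a < a')
    (hS : ∀ᶠ n in atTop, (S n).Nonempty ∧ sInf (S n) = a * n + b)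
    (hSbdd : ∀ n, BddBelow (S n)) (hS' : ∀ᶠ n in atTop, ∀ u ∈ S' n, a' * n + b' ≤ u) :
    ∀ᶠ n in atTop, (S n ∪ S' n).Nonempty ∧ sInf (S n ∪ S' n) = a * n + b := by
  filter_upwards [hS, hS', eventually_ge_atTop 0, eventually_ge_atTop (b - b')]
    with n ⟨hne, hinf⟩ hS'n hn₀ hn
  have hlow : ∀ u ∈ S' n, sInf (S n) ≤ u := fun u hu => by nlinarith [hS'n u hu]
  refine ⟨hne.mono subset_union_left, le_antisymm ?_ (le_csInf (hne.mono subset_union_left) ?_)⟩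
  · exact hinf ▸ csInf_le_csInf (bddBelow_union.2 ⟨hSbdd n, ⟨_, hlow⟩⟩) hne subset_union_left
  · rintro u (hu | hu)
    · exact hinf ▸ csInf_le (hSbdd n) hu
    · exact hinf ▸ hlow u hu

theorem Int.eventually_sInf_union_eq_of_eq {S S' : ℤ → Set ℤ} {a b b' : ℤ}
    (hS : ∀ᶠ n in atTop, (S n).Nonempty ∧ sInf (S n) = a * n + b)
    (hS' : ∀ᶠ n in atTop, (S' n).Nonempty ∧ sInf (S' n) = a * n + b')
    (hSbdd : ∀ n, BddBelow (S n)) (hS'bdd : ∀ n, BddBelow (S' n)) :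
    ∀ᶠ n in atTop, (S n ∪ S' n).Nonempty ∧ sInf (S n ∪ S' n) = a * n + min b b' := by
  filter_upwards [hS, hS'] with n ⟨hne, hinf⟩ ⟨hne', hinf'⟩
  refine ⟨hne.mono subset_union_left, ?_⟩
  rw [csInf_union (hSbdd n) hne (hS'bdd n) hne', hinf, hinf', min_add_add_left]

theorem exists_lt_not_and_forall_lt {α : Type*} [LinearOrder α] [WellFoundedLT α] {P : α → Prop}
    {a : α} (ha : ∀ b ≤ a, P b) (hP : ∃ b, ¬P b) : ∃ b, a < b ∧ ¬P b ∧ ∀ b' < b, P b' := by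
  obtain ⟨b, hb, hmin⟩ := wellFounded_lt.has_min {b | ¬P b} hP
  exact ⟨b, not_le.1 fun hba => hb (ha b hba), hb, fun b' hb' => by_contra fun h => hmin b' h hb'⟩

theorem Ideal.exists_pow_mem_of_forall_mem_radical {R ι : Type*} [CommSemiring R] [Finite ι]
    {I : Ideal R} {a : ι → R} {P : ι → Prop} (h : ∀ i, P i → a i ∈ I.radical) :
    ∃ N, ∀ i, P i → a i ^ N ∈ I := by
  refine (eventually_all.2 fun i => eventually_imp_distrib_left.2 fun hi => ?_).exists (f := atTop)
  obtain ⟨k, hk⟩ := h i hi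
  exact (eventually_ge_atTop k).mono fun n hn => I.pow_mem_of_pow_mem hk hn

theorem Submodule.exists_torsionBy_pow_succ_eq (R M : Type*) [CommSemiring R] [AddCommMonoid M]
    [Module R M] [IsNoetherian R M] (a : R) :
    ∃ s, torsionBy R M (a ^ (s + 1)) = torsionBy R M (a ^ s) := by
  obtain ⟨s, hs⟩ := monotone_stabilizes_iff_noetherian.2 ‹IsNoetherian R M›
    ⟨fun n => torsionBy R M (a ^ n),
      fun m n h => torsionBy_le_torsionBy_of_dvd _ _ (pow_dvd_pow a h)⟩
  exact ⟨s, (hs (s + 1) s.le_succ).symm⟩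

section Rows

variable {T L σT σL : Type*} [SetLike σT T] [SetLike σL L] [Zero L]
  {𝒯 : ℤ × ℤ → σT} (ℒ : ℤ × ℤ → σL)

def rowDegrees (s : Set L) (n : ℤ) : Set ℤ := {u | ∃ z ∈ s, z ∈ ℒ (n, u) ∧ z ≠ 0}

theorem rowDegrees_union (s s' : Set L) (n : ℤ) :
    rowDegrees ℒ (s ∪ s') n = rowDegrees ℒ s n ∪ rowDegrees ℒ s' n := by
  ext u
  simp only [rowDegrees, mem_union, mem_ofPred_eq, or_and_right, exists_or]

theorem rowDegrees_mono {s s' : Set L} (h : s ⊆ s') (n : ℤ) :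
    rowDegrees ℒ s n ⊆ rowDegrees ℒ s' n :=
  fun _ ⟨z, hz, hzn⟩ => ⟨z, h hz, hzn⟩

theorem exists_eventually_sInf_rowDegrees_of_mapsTo [SMul T L] [SetLike.GradedSMul 𝒯 ℒ] {t : T}
    {a : ℤ} (ht : t ∈ 𝒯 (1, a)) {s : Set L} (hts : MapsTo (t • ·) s s) (hs0 : (0 : L) ∉ s)
    {z₀ : L} {n₀ u₀ : ℤ} (hz₀ : z₀ ∈ s) (hz₀' : z₀ ∈ ℒ (n₀, u₀)) {B : ℤ}
    (hB : ∀ n, ∀ u ∈ rowDegrees ℒ s n, a * n + B ≤ u) :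
    ∃ b, ∀ᶠ n in atTop, (rowDegrees ℒ s n).Nonempty ∧ sInf (rowDegrees ℒ s n) = a * n + b := by
  have hsucc : ∀ n u, u ∈ rowDegrees ℒ s n → u + a ∈ rowDegrees ℒ s (n + 1) := by
    rintro n u ⟨z, hz, hzn, -⟩
    refine ⟨t • z, hts hz, ?_, fun h0 => hs0 (h0 ▸ hts hz)⟩
    convert SetLike.GradedSMul.smul_mem ht hzn using 2
    simp [add_comm]
  have hbdd : ∀ n, BddBelow (rowDegrees ℒ s n) := fun n => ⟨_, hB n⟩
  have hne : ∀ n ≥ n₀, (rowDegrees ℒ s n).Nonempty := by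
    intro n hn
    induction n, hn using Int.leInduction with
    | base => exact ⟨u₀, z₀, hz₀, hz₀', fun h0 => hs0 (h0 ▸ hz₀)⟩
    | succ n _ ih => exact ⟨_, hsucc n _ ih.some_mem⟩
  obtain ⟨b, hb⟩ :=
    Int.exists_eventually_eq_linear_of_le_add (h := fun n => sInf (rowDegrees ℒ s n))
    (eventually_atTop.2 ⟨n₀, fun n hn =>
      csInf_le (hbdd _) (hsucc n _ (Int.csInf_mem (hne n hn) (hbdd n)))⟩)
    (eventually_atTop.2 ⟨n₀, fun n hn => hB n _ (Int.csInf_mem (hne n hn) (hbdd n))⟩)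
  exact ⟨b, (eventually_ge_atTop n₀).and hb |>.mono fun n ⟨hn, hbn⟩ => ⟨hne n hn, hbn⟩⟩

end Rows

section Monomials

variable {R₀ T σT : Type*} [CommSemiring R₀] [CommSemiring T] [Algebra R₀ T]
  [SetLike σT T] [AddSubmonoidClass σT T] {𝒯 : ℤ × ℤ → σT} [GradedRing 𝒯]
  {c : ℕ} {y : Fin c → T} {d : Fin c → ℤ}

theorem prod_pow_mul_mem (hy : ∀ j, y j ∈ 𝒯 (1, d j)) (β : Fin c → ℕ) {m : T} {q : ℤ}
    (hm : m ∈ 𝒯 (0, q)) :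
    (∏ j, y j ^ β j) * m ∈ 𝒯 (∑ j, (β j : ℤ), q + ∑ j, (β j : ℤ) * d j) := by
  have hprod := SetLike.prod_pow_mem_graded 𝒯 (fun j => ((1 : ℤ), d j)) y (F := Finset.univ) β
    fun j _ => hy j
  convert SetLike.mul_mem_graded hprod hm using 2
  ext <;> simp [Prod.fst_sum, Prod.snd_sum, add_comm]

variable {dd : ℕ} {x : Fin dd → T} {f : Fin dd → ℤ}

theorem exists_eq_prod_pow_mul_of_mem_closure (hx : ∀ i, x i ∈ 𝒯 (0, f i)) {w : T}
    (hw : w ∈ Submonoid.closure (range x ∪ range y)) :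
    ∃ (β : Fin c → ℕ) (q : ℤ) (m : T), m ∈ 𝒯 (0, q) ∧ w = (∏ j, y j ^ β j) * m := by
  induction hw using Submonoid.closure_induction with
  | mem w hw =>
    rcases hw with ⟨i, rfl⟩ | ⟨j, rfl⟩
    · exact ⟨0, f i, x i, hx i, by simp⟩
    · refine ⟨Pi.single j 1, 0, 1, SetLike.one_mem_graded 𝒯, ?_⟩
      rw [mul_one, Finset.prod_eq_single j (fun k _ hk => by simp [Pi.single_eq_of_ne hk])
        (by simp)]
      simp
  | one => exact ⟨0, 0, 1, SetLike.one_mem_graded 𝒯, by simp⟩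
  | mul w w' _ _ ih ih' =>
    obtain ⟨β, q, m, hm, rfl⟩ := ih
    obtain ⟨β', q', m', hm', rfl⟩ := ih'
    refine ⟨β + β', q + q', m * m', by simpa using SetLike.mul_mem_graded hm hm', ?_⟩
    simp only [Pi.add_apply, pow_add, Finset.prod_mul_distrib]
    ring

theorem exists_prod_pow_mul_smul_ne_zero (hy : ∀ j, y j ∈ 𝒯 (1, d j))
    (hx : ∀ i, x i ∈ 𝒯 (0, f i)) (halg : ∀ r : R₀, algebraMap R₀ T r ∈ 𝒯 (0, 0))
    (hgen : Algebra.adjoin R₀ (range x ∪ range y) = ⊤)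
    {M : Type*} [AddCommMonoid M] [Module T M] {p q : ℤ} {t : T} (ht : t ∈ 𝒯 (p, q)) {z : M}
    (htz : t • z ≠ 0) :
    ∃ (β : Fin c → ℕ) (q' : ℤ) (m : T), m ∈ 𝒯 (0, q') ∧ ((∏ j, y j ^ β j) * m) • z ≠ 0 ∧
      ∑ j, (β j : ℤ) = p ∧ q' + ∑ j, (β j : ℤ) * d j = q := by
  by_contra! hmon
  have key : ∀ t' ∈ Submodule.span R₀ (Submonoid.closure (range x ∪ range y) : Set T),
      (decompose 𝒯 t' (p, q) : T) • z = 0 := by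
    intro t' ht'
    induction ht' using Submodule.span_induction with
    | mem w hw =>
      obtain ⟨β, q', m, hm, rfl⟩ := exists_eq_prod_pow_mul_of_mem_closure hx hw
      have hdeg := prod_pow_mul_mem hy β hm
      by_cases hpq : (∑ j, (β j : ℤ), q' + ∑ j, (β j : ℤ) * d j) = (p, q)
      · rw [decompose_of_mem_same 𝒯 (hpq ▸ hdeg)]
        by_contra hne
        exact hmon β q' m hm hne (congrArg Prod.fst hpq) (congrArg Prod.snd hpq)
      · rw [decompose_of_mem_ne 𝒯 hdeg hpq, zero_smul]
    | zero => simp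
    | add _ _ _ _ ih ih' => simp [add_smul, ih, ih']
    | smul r t' _ ih =>
      rw [Algebra.smul_def, coe_decompose_mul_of_left_mem_zero 𝒯 (halg r), mul_smul, ih, smul_zero]
  apply htz
  have ht' : t ∈ Submodule.span R₀ (Submonoid.closure (range x ∪ range y) : Set T) := by
    rw [← Algebra.adjoin_eq_span, hgen]; trivial
  simpa [decompose_of_mem_same 𝒯 ht] using key t ht'

end Monomials

section Bigraded

variable {R₀ T L : Type*} [CommRing R₀] [CommRing T] [Algebra R₀ T] [AddCommGroup L] [Module T L]
  {𝒯 : ℤ × ℤ → AddSubgroup T} (ℒ : ℤ × ℤ → AddSubgroup L) [Decomposition ℒ]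
  [SetLike.GradedSMul 𝒯 ℒ]

theorem exists_eventually_sInf_rowDegrees_sdiff_torsionBy {M : Submodule T L}
    (hM : M.IsHomogeneous ℒ) {t : T} {a : ℤ} (ht : t ∈ 𝒯 (1, a)) {s : ℕ}
    (hs : Submodule.torsionBy T L (t ^ (s + 1)) = Submodule.torsionBy T L (t ^ s))
    (hMs : ¬M ≤ Submodule.torsionBy T L (t ^ s)) {B : ℤ}
    (hB : ∀ n, ∀ u ∈ rowDegrees ℒ M n, a * n + B ≤ u) :
    ∃ b, ∀ᶠ n in atTop, (rowDegrees ℒ (M \ Submodule.torsionBy T L (t ^ s)) n).Nonempty ∧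
      sInf (rowDegrees ℒ (M \ Submodule.torsionBy T L (t ^ s)) n) = a * n + b := by
  obtain ⟨⟨n₀, u₀⟩, z₀, hz₀, hz₀M, hz₀s⟩ := hM.exists_homogeneous_mem_notMem ℒ hMs
  have hmaps : MapsTo (t • ·) (M \ Submodule.torsionBy T L (t ^ s) : Set L)
      (M \ Submodule.torsionBy T L (t ^ s)) := by
    rintro z ⟨hzM, hzs⟩
    refine ⟨M.smul_mem t hzM, fun htz => hzs ?_⟩
    rw [SetLike.mem_coe, ← hs, Submodule.mem_torsionBy_iff, pow_succ, mul_smul]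
    exact (Submodule.mem_torsionBy_iff _ _).1 htz
  exact exists_eventually_sInf_rowDegrees_of_mapsTo ℒ ht hmaps (fun h => h.2 (zero_mem _))
    ⟨hz₀M, hz₀s⟩ hz₀ fun n u hu => hB n u (rowDegrees_mono ℒ sdiff_subset n hu)

theorem snd_nonneg_of_mem (hTnn : ∀ i : ℤ × ℤ, i.1 < 0 ∨ i.2 < 0 → 𝒯 i = ⊥) {i : ℤ × ℤ} {t : T}
    (ht : t ∈ 𝒯 i) (ht0 : t ≠ 0) : 0 ≤ i.2 := by
  by_contra! hi
  exact ht0 (by simpa [hTnn i (Or.inr hi)] using ht)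

variable [GradedRing 𝒯] {c : ℕ} {y : Fin c → T} {d : Fin c → ℤ} {dd : ℕ} {x : Fin dd → T}
  {f : Fin dd → ℤ}

theorem mul_sub_le_of_smul_ne_zero (hTnn : ∀ i : ℤ × ℤ, i.1 < 0 ∨ i.2 < 0 → 𝒯 i = ⊥)
    (hy : ∀ j, y j ∈ 𝒯 (1, d j)) (hx : ∀ i, x i ∈ 𝒯 (0, f i))
    (halg : ∀ r : R₀, algebraMap R₀ T r ∈ 𝒯 (0, 0))
    (hgen : Algebra.adjoin R₀ (range x ∪ range y) = ⊤)
    {M : Submodule T L} {P : Fin c → Prop} {N : ℕ} (hkill : ∀ j, P j → y j ^ N ∈ M.annihilator)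
    {e : ℤ} (he : 0 ≤ e) (hed : ∀ j, ¬P j → e ≤ d j)
    {p q : ℤ} {t : T} (ht : t ∈ 𝒯 (p, q)) {z : L} (hz : z ∈ M) (htz : t • z ≠ 0) :
    e * (p - c * N) ≤ q := by
  obtain ⟨β, q', m, hm, hne, rfl, rfl⟩ := exists_prod_pow_mul_smul_ne_zero hy hx halg hgen ht htz
  have hmon0 : (∏ j, y j ^ β j) * m ≠ 0 := fun h => hne (by rw [h, zero_smul])
  have hq' : 0 ≤ q' := snd_nonneg_of_mem hTnn hm (right_ne_zero_of_mul hmon0)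
  have hβN : ∀ j, P j → β j < N := by
    intro j hj
    by_contra! hNβ
    refine hne (Submodule.mem_annihilator.1 (Ideal.mem_of_dvd _ ?_ (hkill j hj)) z hz)
    exact ((pow_dvd_pow _ hNβ).trans
      (Finset.dvd_prod_of_mem (fun k => y k ^ β k) (Finset.mem_univ j))).mul_right m
  have hd : ∀ j, β j ≠ 0 → 0 ≤ d j := fun j hj =>
    snd_nonneg_of_mem hTnn (hy j) fun hy0 =>
      hmon0 (by rw [Finset.prod_eq_zero (Finset.mem_univ j) (by simp [hy0, hj]), zero_mul])
  have hterm : ∀ j, e * ((β j : ℤ) - N) ≤ (β j : ℤ) * d j := by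
    intro j
    rcases eq_or_ne (β j) 0 with h0 | h0
    · simp only [h0, Nat.cast_zero, zero_sub, zero_mul]
      nlinarith
    · have := hd j h0
      by_cases hj : P j
      · have : (β j : ℤ) < N := by exact_mod_cast hβN j hj
        nlinarith
      · nlinarith [hed j hj]
  calc e * (∑ j, (β j : ℤ) - c * N) = ∑ j, e * ((β j : ℤ) - N) := by
        simp [Finset.mul_sum, Finset.sum_sub_distrib, mul_sub, mul_left_comm]
    _ ≤ ∑ j, (β j : ℤ) * d j := Finset.sum_le_sum fun j _ => hterm j
    _ ≤ q' + ∑ j, (β j : ℤ) * d j := by linarith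

theorem exists_le_of_mem_rowDegrees [IsNoetherian T L]
    (hTnn : ∀ i : ℤ × ℤ, i.1 < 0 ∨ i.2 < 0 → 𝒯 i = ⊥)
    (hy : ∀ j, y j ∈ 𝒯 (1, d j)) (hx : ∀ i, x i ∈ 𝒯 (0, f i))
    (halg : ∀ r : R₀, algebraMap R₀ T r ∈ 𝒯 (0, 0))
    (hgen : Algebra.adjoin R₀ (range x ∪ range y) = ⊤)
    {M : Submodule T L} (hM : M.IsHomogeneous ℒ)
    {P : Fin c → Prop} {N : ℕ} (hkill : ∀ j, P j → y j ^ N ∈ M.annihilator)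
    {e : ℤ} (he : 0 ≤ e) (hed : ∀ j, ¬P j → e ≤ d j) :
    ∃ B, ∀ n, ∀ u ∈ rowDegrees ℒ M n, e * n + B ≤ u := by
  obtain ⟨s, hs, hspan⟩ := hM.exists_finset_span_eq ℒ (IsNoetherian.noetherian M)
  choose! deg hdeg using hs
  obtain ⟨B, hB⟩ := (s.image fun m => (deg m).2 - e * (deg m).1).bddBelow
  refine ⟨B - e * (c * N), fun n u ⟨z, hzM, hzn, hz0⟩ => ?_⟩
  obtain ⟨m, hms, t, ht, htm⟩ :=
    exists_homogeneous_smul_ne_zero_of_mem_span (𝒜 := 𝒯) ℒ hdeg (hspan ▸ hzM) hzn hz0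
  have hmM : m ∈ M := hspan ▸ Submodule.subset_span hms
  have hle := mul_sub_le_of_smul_ne_zero hTnn hy hx halg hgen hkill he hed
    (p := n - (deg m).1) (q := u - (deg m).2) ht hmM htm
  linarith [hB (Finset.mem_image_of_mem _ hms)]

theorem exists_le_of_mem_rowDegrees_of_forall_mem_radical [IsNoetherian T L]
    (hTnn : ∀ i : ℤ × ℤ, i.1 < 0 ∨ i.2 < 0 → 𝒯 i = ⊥)
    (hy : ∀ j, y j ∈ 𝒯 (1, d j)) (hx : ∀ i, x i ∈ 𝒯 (0, f i))
    (halg : ∀ r : R₀, algebraMap R₀ T r ∈ 𝒯 (0, 0))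
    (hgen : Algebra.adjoin R₀ (range x ∪ range y) = ⊤)
    {M : Submodule T L} (hM : M.IsHomogeneous ℒ) (hnil : ∀ j, y j ∈ M.annihilator.radical)
    {e : ℤ} (he : 0 ≤ e) : ∃ B, ∀ n, ∀ u ∈ rowDegrees ℒ M n, e * n + B ≤ u := by
  obtain ⟨N, hN⟩ := Ideal.exists_pow_mem_of_forall_mem_radical (P := fun _ => True)
    fun j _ => hnil j
  exact exists_le_of_mem_rowDegrees ℒ hTnn hy hx halg hgen hM hN he fun j hj => absurd trivial hj

theorem exists_eventually_sInf_rowDegrees_eq [IsNoetherian T L]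
    (hTnn : ∀ i : ℤ × ℤ, i.1 < 0 ∨ i.2 < 0 → 𝒯 i = ⊥)
    (hy : ∀ j, y j ∈ 𝒯 (1, d j)) (hx : ∀ i, x i ∈ 𝒯 (0, f i))
    (halg : ∀ r : R₀, algebraMap R₀ T r ∈ 𝒯 (0, 0))
    (hgen : Algebra.adjoin R₀ (range x ∪ range y) = ⊤) (hdmono : Monotone d)
    (δ : Fin c) (M : Submodule T L) (hM : M.IsHomogeneous ℒ)
    (hδ : y δ ∉ M.annihilator.radical) (hδmin : ∀ j < δ, y j ∈ M.annihilator.radical) :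
    ∃ b, ∀ᶠ n in atTop, (rowDegrees ℒ M n).Nonempty ∧ sInf (rowDegrees ℒ M n) = d δ * n + b := by
  induction δ using WellFoundedGT.induction generalizing M with
  | ind δ IH =>
  have hδ0 : 0 ≤ d δ := snd_nonneg_of_mem hTnn (hy δ) fun h0 => hδ (h0 ▸ zero_mem _)
  obtain ⟨N, hN⟩ := Ideal.exists_pow_mem_of_forall_mem_radical hδmin
  obtain ⟨B, hB⟩ := exists_le_of_mem_rowDegrees ℒ hTnn hy hx halg hgen hM hN hδ0
    fun j hj => hdmono (not_lt.1 hj)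
  obtain ⟨s, hs⟩ := Submodule.exists_torsionBy_pow_succ_eq T L (y δ)
  set K := M ⊓ Submodule.torsionBy T L (y δ ^ s)
  have hK : K.IsHomogeneous ℒ :=
    hM.inf ℒ (Submodule.isHomogeneous_torsionBy ℒ (SetLike.pow_mem_graded s (hy δ)))
  have hyK : y δ ^ s ∈ K.annihilator :=
    Submodule.mem_annihilator.2 fun z hz => (Submodule.mem_torsionBy_iff _ _).1 hz.2
  obtain ⟨b, hb⟩ := exists_eventually_sInf_rowDegrees_sdiff_torsionBy ℒ hM (hy δ) hs
    (fun hle => hδ ⟨s, Submodule.annihilator_mono (le_inf le_rfl hle) hyK⟩) hB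
  have hbdd : ∀ s' ⊆ (M : Set L), ∀ n, BddBelow (rowDegrees ℒ s' n) :=
    fun s' hs' n => ⟨_, fun u hu => hB n u (rowDegrees_mono ℒ hs' n hu)⟩
  have hrows : ∀ n, rowDegrees ℒ M n =
      rowDegrees ℒ (M \ Submodule.torsionBy T L (y δ ^ s)) n ∪ rowDegrees ℒ K n := fun n => by
    rw [← rowDegrees_union, Submodule.coe_inf, sdiff_union_inter]
  simp only [hrows]
  by_cases hKnil : ∀ j, y j ∈ K.annihilator.radical
  · obtain ⟨B', hB'⟩ := exists_le_of_mem_rowDegrees_of_forall_mem_radical ℒ hTnn hy hx halg hgen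
      hK hKnil (by omega : 0 ≤ d δ + 1)
    exact ⟨b, Int.eventually_sInf_union_eq_of_lt (lt_add_one _) hb (hbdd _ sdiff_subset)
      (Eventually.of_forall fun n => hB' n)⟩
  obtain ⟨δ', hlt, hδ', hδ'min⟩ := exists_lt_not_and_forall_lt
    (P := fun j => y j ∈ K.annihilator.radical) (fun j hj => hj.lt_or_eq.elim
      (fun h => Ideal.radical_mono (Submodule.annihilator_mono inf_le_left) (hδmin j h))
      (fun h => h ▸ ⟨s, hyK⟩)) (not_forall.1 hKnil)
  obtain ⟨b', hb'⟩ := IH δ' hlt K hK hδ' hδ'min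
  have hbddK := hbdd K (show (K : Set L) ⊆ M from inf_le_left)
  rcases (hdmono hlt.le).lt_or_eq with hd | hd
  · exact ⟨b, Int.eventually_sInf_union_eq_of_lt hd hb (hbdd _ sdiff_subset)
      (hb'.mono fun n hn u hu => hn.2 ▸ csInf_le (hbddK n) hu)⟩
  · exact ⟨min b b', Int.eventually_sInf_union_eq_of_eq hb (hd ▸ hb') (hbdd _ sdiff_subset) hbddK⟩

end Bigraded

theorem indeg_row_eventually_linear_general
    {R₀ T L : Type*} [CommRing R₀] [CommRing T] [Algebra R₀ T]
    [IsNoetherianRing T] [AddCommGroup L] [Module T L] [Module.Finite T L]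
    (𝒯 : ℤ × ℤ → AddSubgroup T) [GradedRing 𝒯]
    (ℒ : ℤ × ℤ → AddSubgroup L) [DirectSum.Decomposition ℒ]
    (hsmul : ∀ (i j : ℤ × ℤ), ∀ t ∈ 𝒯 i, ∀ m ∈ ℒ j, t • m ∈ ℒ (i + j))
    (hTnn : ∀ i : ℤ × ℤ, i.1 < 0 ∨ i.2 < 0 → 𝒯 i = ⊥)
    (halg : ∀ r : R₀, algebraMap R₀ T r ∈ 𝒯 (0, 0))
    (dd c : ℕ) (x : Fin dd → T) (y : Fin c → T)
    (f : Fin dd → ℤ) (d : Fin c → ℤ) (hdmono : Monotone d)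
    (hx : ∀ i, x i ∈ 𝒯 (0, f i)) (hy : ∀ j, y j ∈ 𝒯 (1, d j))
    (hgen : Algebra.adjoin R₀ (Set.range x ∪ Set.range y) = ⊤)
    (δ : Fin c) (hδ : y δ ∉ ((⊤ : Submodule T L).annihilator).radical)
    (hδmin : ∀ j : Fin c, j < δ → y j ∈ ((⊤ : Submodule T L).annihilator).radical) :
    ∃ b₁ : ℤ, ∃ n₀ : ℤ, ∀ n ≥ n₀,
      sInf {u : ℤ | ℒ (n, u) ≠ ⊥} = d δ * n + b₁ := by
  have : SetLike.GradedSMul 𝒯 ℒ := ⟨fun i j _ _ ht hm => hsmul i j _ ht _ hm⟩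
  obtain ⟨b, hb⟩ := exists_eventually_sInf_rowDegrees_eq ℒ hTnn hy hx halg hgen hdmono δ ⊤
    (fun _ _ _ => Submodule.mem_top) hδ hδmin
  obtain ⟨n₀, hn₀⟩ := eventually_atTop.1 hb
  refine ⟨b, n₀, fun n hn => ?_⟩
  have hrow : {u : ℤ | ℒ (n, u) ≠ ⊥} = rowDegrees ℒ (⊤ : Submodule T L) n := by
    ext u
    simp [rowDegrees, AddSubgroup.eq_bot_iff_forall]
  rw [hrow, (hn₀ n hn).2]

/-- In the bigraded setup (Noetherian (ℕ×ℕ)-graded ring `T`, generated over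
`R₀` by `x i` of degrees `(0, f i)` and `y j` of degrees `(1, d j)`, `d` monotone, and a
finitely generated (ℤ×ℤ)-graded `T`-module `ℒ`), assume `ℒ_{(n,*)} ≠ 0` for all sufficiently
large `n` and let `δ` be the least index with `y δ ∉ √(Ann_T ℒ)`.  Then there is `b₁ ∈ ℤ`
such that `indeg(ℒ_{(n,*)}) = d δ * n + b₁` for all sufficiently large `n`, where
`indeg(ℒ_{(n,*)}) = inf{u | ℒ_{(n,u)} ≠ 0}`. -/
theorem indeg_row_eventually_linear
    {R₀ T L : Type*} [CommRing R₀] [IsNoetherianRing R₀] [CommRing T] [Algebra R₀ T]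
    [IsNoetherianRing T] [AddCommGroup L] [Module T L] [Module.Finite T L]
    (𝒯 : ℤ × ℤ → AddSubgroup T) [GradedRing 𝒯]
    (ℒ : ℤ × ℤ → AddSubgroup L) [DirectSum.Decomposition ℒ]
    (hsmul : ∀ (i j : ℤ × ℤ), ∀ t ∈ 𝒯 i, ∀ m ∈ ℒ j, t • m ∈ ℒ (i + j))
    (hTnn : ∀ i : ℤ × ℤ, i.1 < 0 ∨ i.2 < 0 → 𝒯 i = ⊥)
    (halg : ∀ r : R₀, algebraMap R₀ T r ∈ 𝒯 (0, 0))
    (dd c : ℕ) (x : Fin dd → T) (y : Fin c → T)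
    (f : Fin dd → ℤ) (d : Fin c → ℤ) (hdmono : Monotone d)
    (hx : ∀ i, x i ∈ 𝒯 (0, f i)) (hy : ∀ j, y j ∈ 𝒯 (1, d j))
    (hgen : Algebra.adjoin R₀ (Set.range x ∪ Set.range y) = ⊤)
    (hnz : ∃ n₀ : ℤ, ∀ n ≥ n₀, ∃ l : ℤ, ℒ (n, l) ≠ ⊥)
    (δ : Fin c) (hδ : y δ ∉ ((⊤ : Submodule T L).annihilator).radical)
    (hδmin : ∀ j : Fin c, j < δ → y j ∈ ((⊤ : Submodule T L).annihilator).radical) :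
    ∃ b₁ : ℤ, ∃ n₀ : ℤ, ∀ n ≥ n₀,
      sInf {u : ℤ | ℒ (n, u) ≠ ⊥} = d δ * n + b₁ :=
  indeg_row_eventually_linear_general 𝒯 ℒ hsmul hTnn halg dd c x y f d hdmono hx hy hgen δ hδ hδmin
end
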